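/- arXiv:2402.07268 — 3 statements merged into one kernel-verified Lean document; each statement's English description precedes it below -/
import Mathlib

section
/- For all X̂, H ∈ ℝ^{n×d}, the function t ↦ f(X̂ + tH) is differentiable at t = 0 with derivative equal to 2·Tr(Hᵀ(D̃(X̂ − X) + 2(D − A)X̂)); consequently X̂ is a critical point of f if and only if (D̃ + 2(D − A))X̂ = D̃X. -/
/-!
Each summand of `f (X̂ + t H)` is the square of an affine function of `t`, so the derivative
at `0` is the sum of the linear coefficients. For symmetric `A`, swapping `i` and `j` turns
the edge term `∑ A_ij ⟨X̂_i - X̂_j, H_i - H_j⟩` into `2 tr (Hᵀ (D - A) X̂)`, so the derivative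
is `2 tr (Hᵀ G)` with `G = D̃ (X̂ - X) + 2 (D - A) X̂`. Taking the direction `H = G` shows
that all directional derivatives vanish exactly when `tr (Gᵀ G) = 0`, i.e. when `G = 0`.
-/

open Matrix BigOperators Finset

/-- The paper's optimization objective (Definition 1, with the node term weighted by `D̃`):
`f(X̂) = ∑_i D̃_{ii} ‖X̂_i − X_i‖² + ∑_i ∑_j A_{ij} ‖X̂_i − X̂_j‖²`. -/
noncomputable def objF {n d : ℕ} (A : Matrix (Fin n) (Fin n) ℝ)
    (X Xhat : Matrix (Fin n) (Fin d) ℝ) : ℝ :=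
  ∑ i, ((∑ j, A i j) + 1) * (∑ k, (Xhat i k - X i k) ^ 2)
    + ∑ i, ∑ j, A i j * (∑ k, (Xhat i k - Xhat j k) ^ 2)

namespace Matrix

variable {m n R : Type*} [Fintype m]

theorem trace_transpose_mul_eq_sum [Fintype n] [AddCommMonoid R] [Mul R] (H M : Matrix m n R) :
    trace (Hᵀ * M) = ∑ i, ∑ k, H i k * M i k := by
  simp only [trace, diag_apply, mul_apply, transpose_apply]
  exact Finset.sum_comm

variable [DecidableEq m]

def degreeMatrix [AddCommMonoid R] (A : Matrix m m R) : Matrix m m R :=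
  diagonal fun i => ∑ j, A i j

theorem degreeMatrix_sub_mul_apply [Ring R] (A : Matrix m m R) (U : Matrix m n R) (i : m) (k : n) :
    ((degreeMatrix A - A) * U : Matrix m n R) i k = ∑ j, A i j * (U i k - U j k) := by
  rw [Matrix.sub_mul, sub_apply, degreeMatrix, diagonal_mul]
  simp only [mul_apply, Finset.sum_mul, mul_sub, Finset.sum_sub_distrib]

theorem degreeMatrix_add_one_mul_apply [Semiring R] (A : Matrix m m R) (U : Matrix m n R)
    (i : m) (k : n) :
    ((degreeMatrix A + 1) * U : Matrix m n R) i k = (∑ j, A i j + 1) * U i k := by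
  rw [Matrix.add_mul, Matrix.one_mul, add_apply, degreeMatrix, diagonal_mul, add_mul, one_mul]

theorem sum_mul_sum_sub_mul_sub_eq_of_transpose_eq [Fintype n] [CommRing R] {A : Matrix m m R}
    (hA : Aᵀ = A) (U V : Matrix m n R) :
    ∑ i, ∑ j, A i j * ∑ k, (U i k - U j k) * (V i k - V j k)
      = 2 * ∑ i, ∑ k, V i k * ((degreeMatrix A - A) * U : Matrix m n R) i k := by
  have hswap : ∑ i, ∑ j, A i j * ∑ k, (U i k - U j k) * V j k
      = -∑ i, ∑ j, A i j * ∑ k, (U i k - U j k) * V i k := by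
    rw [Finset.sum_comm, ← Finset.sum_neg_distrib]
    refine Finset.sum_congr rfl fun i _ => ?_
    rw [← Finset.sum_neg_distrib]
    refine Finset.sum_congr rfl fun j _ => ?_
    rw [← congrFun (congrFun hA i) j, transpose_apply, ← mul_neg, ← Finset.sum_neg_distrib]
    exact congrArg _ (Finset.sum_congr rfl fun k _ => by ring)
  calc ∑ i, ∑ j, A i j * ∑ k, (U i k - U j k) * (V i k - V j k)
      = ∑ i, ∑ j, A i j * ∑ k, (U i k - U j k) * V i k
        - ∑ i, ∑ j, A i j * ∑ k, (U i k - U j k) * V j k := by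
        simp only [mul_sub, Finset.sum_sub_distrib]
    _ = 2 * ∑ i, ∑ j, A i j * ∑ k, (U i k - U j k) * V i k := by rw [hswap]; ring
    _ = 2 * ∑ i, ∑ k, V i k * ((degreeMatrix A - A) * U : Matrix m n R) i k := by
        congr 1
        refine Finset.sum_congr rfl fun i _ => ?_
        simp only [degreeMatrix_sub_mul_apply, Finset.mul_sum]
        rw [Finset.sum_comm]
        exact Finset.sum_congr rfl fun k _ => Finset.sum_congr rfl fun j _ => by ring

end Matrix

theorem hasDerivAt_add_mul_sq (a b : ℝ) :
    HasDerivAt (fun t : ℝ => (a + t * b) ^ 2) (2 * (a * b)) 0 := by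
  simpa [mul_assoc] using (((hasDerivAt_id (0 : ℝ)).mul_const b).const_add a).fun_pow 2

theorem forall_hasDerivAt_zero_iff_of_hasDerivAt_trace {m n : Type*} [Fintype m] [Fintype n]
    {f : Matrix m n ℝ → ℝ} {x G : Matrix m n ℝ}
    (hf : ∀ H, HasDerivAt (fun t : ℝ => f (x + t • H)) (trace (Hᵀ * G)) 0) :
    (∀ H, HasDerivAt (fun t : ℝ => f (x + t • H)) 0 0) ↔ G = 0 := by
  refine ⟨fun hcrit => ?_, fun hG H => by simpa [hG] using hf H⟩
  rw [← trace_conjTranspose_mul_self_eq_zero_iff, conjTranspose_eq_transpose_of_trivial]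
  exact (hf G).unique (hcrit G)

theorem hasDerivAt_objF_line {n d : ℕ} (A : Matrix (Fin n) (Fin n) ℝ)
    (X Xhat H : Matrix (Fin n) (Fin d) ℝ) :
    HasDerivAt (fun t : ℝ => objF A X (Xhat + t • H))
      (2 * ∑ i, (∑ j, A i j + 1) * ∑ k, (Xhat - X) i k * H i k
        + 2 * ∑ i, ∑ j, A i j * ∑ k, (Xhat i k - Xhat j k) * (H i k - H j k)) 0 := by
  have hnode : ∀ i k, HasDerivAt (fun t : ℝ => ((Xhat + t • H) i k - X i k) ^ 2)
      (2 * ((Xhat - X) i k * H i k)) 0 := fun i k => by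
    convert hasDerivAt_add_mul_sq ((Xhat - X) i k) (H i k) using 2 with t
    simp only [Matrix.add_apply, Matrix.sub_apply, Matrix.smul_apply, smul_eq_mul]; ring
  have hedge : ∀ i j k,
      HasDerivAt (fun t : ℝ => ((Xhat + t • H) i k - (Xhat + t • H) j k) ^ 2)
      (2 * ((Xhat i k - Xhat j k) * (H i k - H j k))) 0 := fun i j k => by
    convert hasDerivAt_add_mul_sq (Xhat i k - Xhat j k) (H i k - H j k) using 2 with t
    simp only [Matrix.add_apply, Matrix.smul_apply, smul_eq_mul]; ring
  refine ((HasDerivAt.fun_sum fun i _ => (HasDerivAt.fun_sum fun k _ => hnode i k).const_mul _).add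
    (HasDerivAt.fun_sum fun i _ => HasDerivAt.fun_sum fun j _ =>
      (HasDerivAt.fun_sum fun k _ => hedge i j k).const_mul _)).congr_deriv ?_
  simp only [← Finset.mul_sum, mul_left_comm _ (2 : ℝ)]

theorem hasDerivAt_objF_line_eq_trace {n d : ℕ} {A : Matrix (Fin n) (Fin n) ℝ} (hA : Aᵀ = A)
    (X Xhat H : Matrix (Fin n) (Fin d) ℝ) :
    HasDerivAt (fun t : ℝ => objF A X (Xhat + t • H))
      (2 * trace (Hᵀ * ((degreeMatrix A + 1) * (Xhat - X)
        + (2 : ℝ) • ((degreeMatrix A - A) * Xhat)))) 0 := by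
  convert hasDerivAt_objF_line A X Xhat H using 1
  rw [sum_mul_sum_sub_mul_sub_eq_of_transpose_eq hA, Matrix.mul_add, trace_add, Matrix.mul_smul,
    trace_smul, trace_transpose_mul_eq_sum, trace_transpose_mul_eq_sum]
  have hnode :
      ∑ i, ∑ k, H i k * ((degreeMatrix A + 1) * (Xhat - X) : Matrix (Fin n) (Fin d) ℝ) i k
      = ∑ i, (∑ j, A i j + 1) * ∑ k, (Xhat - X) i k * H i k := by
    refine Finset.sum_congr rfl fun i _ => ?_
    rw [Finset.mul_sum]
    exact Finset.sum_congr rfl fun k _ => by rw [degreeMatrix_add_one_mul_apply]; ring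
  rw [hnode, smul_eq_mul]
  ring

theorem objF_directional_deriv_and_critical_point_general
    (n d : ℕ)
    (A : Matrix (Fin n) (Fin n) ℝ)
    (hA_symm : Aᵀ = A)
    (D Dt : Matrix (Fin n) (Fin n) ℝ)
    (hD : D = Matrix.diagonal (fun i => ∑ j, A i j))
    (hDt : Dt = D + 1)
    (X : Matrix (Fin n) (Fin d) ℝ) :
    (∀ Xhat H : Matrix (Fin n) (Fin d) ℝ,
        HasDerivAt (fun t : ℝ => objF A X (Xhat + t • H))
          (2 * Matrix.trace (Hᵀ * (Dt * (Xhat - X) + (2 : ℝ) • ((D - A) * Xhat)))) 0)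
      ∧ (∀ Xhat : Matrix (Fin n) (Fin d) ℝ,
          (∀ H : Matrix (Fin n) (Fin d) ℝ,
            HasDerivAt (fun t : ℝ => objF A X (Xhat + t • H)) 0 0)
          ↔ (Dt + (2 : ℝ) • (D - A)) * Xhat = Dt * X) := by
  replace hD : D = degreeMatrix A := hD
  subst hD hDt
  have hderiv := hasDerivAt_objF_line_eq_trace hA_symm X
  refine ⟨hderiv, fun Xhat => ?_⟩
  have hgrad : (degreeMatrix A + 1) * (Xhat - X) + (2 : ℝ) • ((degreeMatrix A - A) * Xhat)
      = (degreeMatrix A + 1 + (2 : ℝ) • (degreeMatrix A - A)) * Xhat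
        - (degreeMatrix A + 1) * X := by
    simp only [Matrix.mul_sub, Matrix.add_mul, Matrix.smul_mul]
    abel
  rw [← sub_eq_zero, ← hgrad, ← smul_eq_zero_iff_right (two_ne_zero' ℝ)]
  refine forall_hasDerivAt_zero_iff_of_hasDerivAt_trace fun H => ?_
  rw [Matrix.mul_smul, trace_smul, smul_eq_mul]
  exact hderiv Xhat H

/-- For all `X̂, H ∈ ℝ^{n×d}`, the function `t ↦ f(X̂ + tH)` is differentiable
at `t = 0` with derivative `2 Tr(Hᵀ(D̃(X̂ − X) + 2(D − A)X̂))`; consequently `X̂` is a critical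
point of `f` if and only if `(D̃ + 2(D − A))X̂ = D̃X`. -/
theorem objF_directional_deriv_and_critical_point
    (n d : ℕ) (hn : 0 < n) (hd : 0 < d)
    (A : Matrix (Fin n) (Fin n) ℝ)
    (hA_symm : Aᵀ = A)
    (hA_diag : ∀ i, A i i = 0)
    (hA_01 : ∀ i j, A i j = 0 ∨ A i j = 1)
    (D Dt : Matrix (Fin n) (Fin n) ℝ)
    (hD : D = Matrix.diagonal (fun i => ∑ j, A i j))
    (hDt : Dt = D + 1)
    (X : Matrix (Fin n) (Fin d) ℝ) :
    (∀ Xhat H : Matrix (Fin n) (Fin d) ℝ,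
        HasDerivAt (fun t : ℝ => objF A X (Xhat + t • H))
          (2 * Matrix.trace (Hᵀ * (Dt * (Xhat - X) + (2 : ℝ) • ((D - A) * Xhat)))) 0)
      ∧ (∀ Xhat : Matrix (Fin n) (Fin d) ℝ,
          (∀ H : Matrix (Fin n) (Fin d) ℝ,
            HasDerivAt (fun t : ℝ => objF A X (Xhat + t • H)) 0 0)
          ↔ (Dt + (2 : ℝ) • (D - A)) * Xhat = Dt * X) :=
  objF_directional_deriv_and_critical_point_general n d A hA_symm D Dt hD hDt X
end

section
/- The matrix X̂* = (D̃ + 2(D − A))^{-1} D̃ X is the unique global minimizer of the objective f: for every Ŷ ∈ ℝ^{n×d} one has f(X̂*) ≤ f(Ŷ), with equality if and only if Ŷ = X̂*. (This makes precise the closed-form optimal solution of the paper's Definition 1 optimization problem, used in Theorem 1.) -/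
open Matrix BigOperators Finset

/-! Read `A` as the adjacency matrix of a simple graph with Laplacian `L = D - A`. Then
`f(Y) = tr((Y - X)ᵀ D̃ (Y - X)) + tr(Yᵀ (2L) Y)` is a quadratic function of `Y` whose Hessian
`M = D̃ + 2L` is positive definite. Since `M X̂* = D̃ X`, the linear part of `f` at `X̂*` vanishes,
so `f(Y) = f(X̂*) + tr((Y - X̂*)ᵀ M (Y - X̂*))`. -/

namespace Matrix

variable {m n R : Type*} [Fintype m] [Fintype n]

section CommRing

variable [CommRing R]

theorem trace_transpose_mul_mul_eq_sum (S : Matrix m m R) (Y : Matrix m n R) :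
    trace (Yᵀ * S * Y) = ∑ k, (fun i => Y i k) ⬝ᵥ S *ᵥ (fun i => Y i k) := by
  simp only [trace, diag, mul_apply, transpose_apply, dotProduct, mulVec, Finset.sum_mul,
    Finset.mul_sum]
  refine Finset.sum_congr rfl fun k _ => ?_
  rw [Finset.sum_comm]
  exact Finset.sum_congr rfl fun i _ => Finset.sum_congr rfl fun j _ => by ring

theorem trace_transpose_mul_diagonal_mul [DecidableEq m] (w : m → R) (Y : Matrix m n R) :
    trace (Yᵀ * diagonal w * Y) = ∑ i, w i * ∑ k, Y i k ^ 2 := by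
  simp only [trace_transpose_mul_mul_eq_sum, mulVec_diagonal, dotProduct, Finset.mul_sum]
  rw [Finset.sum_comm]
  exact Finset.sum_congr rfl fun i _ => Finset.sum_congr rfl fun k _ => by ring

theorem trace_transpose_add_mul_mul_add {S : Matrix m m R} (hS : S.IsSymm) (U Z : Matrix m n R) :
    trace ((U + Z)ᵀ * S * (U + Z))
      = trace (Uᵀ * S * U) + 2 * trace (Zᵀ * S * U) + trace (Zᵀ * S * Z) := by
  have hcross : trace (Uᵀ * S * Z) = trace (Zᵀ * S * U) := by
    rw [← trace_transpose, transpose_mul, transpose_mul, transpose_transpose, hS.eq,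
      Matrix.mul_assoc]
  simp only [transpose_add, Matrix.add_mul, Matrix.mul_add, trace_add, hcross]
  ring

def quadCost (P Q : Matrix m m R) (X Y : Matrix m n R) : R :=
  trace ((Y - X)ᵀ * P * (Y - X)) + trace (Yᵀ * Q * Y)

theorem quadCost_eq_add {P Q : Matrix m m R} (hP : P.IsSymm) (hQ : Q.IsSymm)
    {X Xs : Matrix m n R} (hXs : (P + Q) * Xs = P * X) (Y : Matrix m n R) :
    quadCost P Q X Y = quadCost P Q X Xs + trace ((Y - Xs)ᵀ * (P + Q) * (Y - Xs)) := by
  have hcross : trace ((Y - Xs)ᵀ * P * (Xs - X)) + trace ((Y - Xs)ᵀ * Q * Xs) = 0 := by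
    rw [← trace_add, Matrix.mul_assoc, Matrix.mul_assoc, ← Matrix.mul_add, Matrix.mul_sub,
      ← add_sub_right_comm, ← Matrix.add_mul, hXs, sub_self, Matrix.mul_zero, trace_zero]
  obtain ⟨Z, rfl⟩ : ∃ Z, Y = Xs + Z := ⟨Y - Xs, by abel⟩
  rw [add_sub_cancel_left] at hcross ⊢
  unfold quadCost
  rw [add_sub_right_comm, trace_transpose_add_mul_mul_add hP, trace_transpose_add_mul_mul_add hQ,
    Matrix.mul_add, Matrix.add_mul, trace_add]
  linear_combination 2 * hcross

end CommRing

theorem PosSemidef.trace_transpose_mul_mul_nonneg {P : Matrix m m ℝ} (hP : P.PosSemidef)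
    (Z : Matrix m n ℝ) : 0 ≤ trace (Zᵀ * P * Z) := by
  rw [trace_transpose_mul_mul_eq_sum]
  exact Finset.sum_nonneg fun k _ => by simpa using hP.dotProduct_mulVec_nonneg (fun i => Z i k)

theorem PosDef.trace_transpose_mul_mul_eq_zero_iff {P : Matrix m m ℝ} (hP : P.PosDef)
    (Z : Matrix m n ℝ) : trace (Zᵀ * P * Z) = 0 ↔ Z = 0 := by
  refine ⟨fun h => ?_, fun h => by simp [h]⟩
  rw [trace_transpose_mul_mul_eq_sum,
    Finset.sum_eq_zero_iff_of_nonneg fun k _ => by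
      simpa using hP.posSemidef.dotProduct_mulVec_nonneg (fun i => Z i k)] at h
  ext i k
  by_contra hne
  have hcol : (fun i => Z i k) ≠ 0 := fun h0 => hne (congrFun h0 i)
  simpa [h k (Finset.mem_univ k)] using hP.dotProduct_mulVec_pos hcol

theorem quadCost_inv_mul_le_and_eq_iff [DecidableEq m] {P Q : Matrix m m ℝ} (hP : P.PosDef)
    (hQ : Q.PosSemidef) (X Y : Matrix m n ℝ) :
    quadCost P Q X ((P + Q)⁻¹ * (P * X)) ≤ quadCost P Q X Y ∧
      (quadCost P Q X ((P + Q)⁻¹ * (P * X)) = quadCost P Q X Y ↔ Y = (P + Q)⁻¹ * (P * X)) := by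
  have hM : (P + Q).PosDef := hP.add_posSemidef hQ
  have hXs : (P + Q) * ((P + Q)⁻¹ * (P * X)) = P * X := by
    rw [← Matrix.mul_assoc, mul_nonsing_inv _ ((isUnit_iff_isUnit_det _).mp hM.isUnit),
      Matrix.one_mul]
  rw [quadCost_eq_add (isHermitian_iff_isSymm.mp hP.isHermitian)
    (isHermitian_iff_isSymm.mp hQ.isHermitian) hXs Y, le_add_iff_nonneg_right, left_eq_add,
    hM.trace_transpose_mul_mul_eq_zero_iff, sub_eq_zero]
  exact ⟨hM.posSemidef.trace_transpose_mul_mul_nonneg _, Iff.rfl⟩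

end Matrix

namespace SimpleGraph

variable {V : Type*} [Fintype V] (G : SimpleGraph V) [DecidableRel G.Adj]

theorem sum_adjMatrix_apply (R : Type*) [NonAssocSemiring R] (i : V) :
    ∑ j, G.adjMatrix R i j = G.degree i := by
  simpa only [adjMatrix_apply] using (G.degree_eq_sum_if_adj i).symm

theorem diagonal_sum_adjMatrix [DecidableEq V] (R : Type*) [NonAssocSemiring R] :
    diagonal (fun i => ∑ j, G.adjMatrix R i j) = G.degMatrix R := by
  simp only [sum_adjMatrix_apply, degMatrix]

theorem sum_adjMatrix_mul_sq_sub_eq_two_mul [DecidableEq V] {R : Type*} [Field R] [CharZero R]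
    (x : V → R) :
    ∑ i, ∑ j, G.adjMatrix R i j * (x i - x j) ^ 2 = 2 * (x ⬝ᵥ G.lapMatrix R *ᵥ x) := by
  rw [← toLinearMap₂'_apply', lapMatrix_toLinearMap₂']
  simp only [adjMatrix_apply, ite_mul, one_mul, zero_mul]
  ring

end SimpleGraph

open SimpleGraph

theorem objF_adjMatrix_eq_quadCost {n d : ℕ} (G : SimpleGraph (Fin n)) [DecidableRel G.Adj]
    (X Y : Matrix (Fin n) (Fin d) ℝ) :
    objF (G.adjMatrix ℝ) X Y = quadCost (G.degMatrix ℝ + 1) ((2 : ℝ) • G.lapMatrix ℝ) X Y := by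
  have hdeg : G.degMatrix ℝ + 1 = diagonal (fun i => (G.degree i : ℝ) + 1) := by
    rw [degMatrix, ← diagonal_one, diagonal_add]
  have hlap : ∑ i, ∑ j, G.adjMatrix ℝ i j * ∑ k, (Y i k - Y j k) ^ 2
      = trace (Yᵀ * ((2 : ℝ) • G.lapMatrix ℝ) * Y) := by
    rw [Matrix.mul_smul, Matrix.smul_mul, trace_smul, trace_transpose_mul_mul_eq_sum, smul_eq_mul,
      Finset.mul_sum]
    simp_rw [← sum_adjMatrix_mul_sq_sub_eq_two_mul, Finset.mul_sum]
    exact (Finset.sum_congr rfl fun (i : Fin n) _ => Finset.sum_comm).trans Finset.sum_comm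
  unfold objF quadCost
  rw [hdeg, trace_transpose_mul_diagonal_mul, hlap]
  simp only [sum_adjMatrix_apply, Matrix.sub_apply]

theorem objF_unique_global_minimizer_general
    (n d : ℕ)
    (A : Matrix (Fin n) (Fin n) ℝ)
    (hA_symm : Aᵀ = A)
    (hA_diag : ∀ i, A i i = 0)
    (hA_01 : ∀ i j, A i j = 0 ∨ A i j = 1)
    (D Dt : Matrix (Fin n) (Fin n) ℝ)
    (hD : D = Matrix.diagonal (fun i => ∑ j, A i j))
    (hDt : Dt = D + 1)
    (X Xstar : Matrix (Fin n) (Fin d) ℝ)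
    (hXstar : Xstar = (Dt + (2 : ℝ) • (D - A))⁻¹ * (Dt * X)) :
    ∀ Yhat : Matrix (Fin n) (Fin d) ℝ,
      objF A X Xstar ≤ objF A X Yhat
      ∧ (objF A X Xstar = objF A X Yhat ↔ Yhat = Xstar) := by
  intro Yhat
  have hA : A.IsAdjMatrix := ⟨hA_01, hA_symm, hA_diag⟩
  obtain ⟨G, _, rfl⟩ : ∃ (G : SimpleGraph (Fin n)) (_ : DecidableRel G.Adj), G.adjMatrix ℝ = A :=
    ⟨hA.toGraph, inferInstance, hA.adjMatrix_toGraph_eq⟩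
  rw [diagonal_sum_adjMatrix] at hD
  subst hD hDt hXstar
  have hdeg : (G.degMatrix ℝ).PosSemidef :=
    posSemidef_diagonal_iff.mpr fun i => Nat.cast_nonneg (G.degree i)
  have hP : (G.degMatrix ℝ + 1).PosDef := PosDef.posSemidef_add hdeg .one
  have hQ : ((2 : ℝ) • G.lapMatrix ℝ).PosSemidef := (G.posSemidef_lapMatrix ℝ).smul zero_le_two
  simp only [objF_adjMatrix_eq_quadCost]
  exact quadCost_inv_mul_le_and_eq_iff hP hQ X Yhat

/-- The matrix `X̂* = (D̃ + 2(D − A))⁻¹ D̃ X` is the unique global minimizer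
of the objective `f`: for every `Ŷ ∈ ℝ^{n×d}` one has `f(X̂*) ≤ f(Ŷ)`, with equality iff
`Ŷ = X̂*`. -/
theorem objF_unique_global_minimizer
    (n d : ℕ) (hn : 0 < n) (hd : 0 < d)
    (A : Matrix (Fin n) (Fin n) ℝ)
    (hA_symm : Aᵀ = A)
    (hA_diag : ∀ i, A i i = 0)
    (hA_01 : ∀ i j, A i j = 0 ∨ A i j = 1)
    (D Dt : Matrix (Fin n) (Fin n) ℝ)
    (hD : D = Matrix.diagonal (fun i => ∑ j, A i j))
    (hDt : Dt = D + 1)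
    (X Xstar : Matrix (Fin n) (Fin d) ℝ)
    (hXstar : Xstar = (Dt + (2 : ℝ) • (D - A))⁻¹ * (Dt * X)) :
    ∀ Yhat : Matrix (Fin n) (Fin d) ℝ,
      objF A X Xstar ≤ objF A X Yhat
      ∧ (objF A X Xstar = objF A X Yhat ↔ Yhat = Xstar) :=
  objF_unique_global_minimizer_general n d A hA_symm hA_diag hA_01 D Dt hD hDt X Xstar hXstar
end

section
/- Let P ∈ ℝ^{n×n} be symmetric with nonnegative entries and every row sum equal to 1. Then D̃ + I − P is positive definite, the matrix I − D̃^{-1}(P − I) is invertible, and the unique global minimizer of the weighted objective f_P is X̂* = (I − D̃^{-1}(P − I))^{-1} X, i.e. for every Ŷ ∈ ℝ^{n×d}, f_P(X̂*) ≤ f_P(Ŷ) with equality iff Ŷ = X̂*. (This is the closed-form optimal solution derived in Appendix D.) -/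
/-!
With `D̃ = diag(deg + 1)`, the objective splits over the columns `y` of `X̂` as
`(y - x)ᵀ D̃ (y - x) + yᵀ (I - P) y`, since for a doubly stochastic `P`
`½ ∑ᵢⱼ Pᵢⱼ (yᵢ - yⱼ)² = yᵀ (I - P) y`. In particular `I - P` is positive semidefinite, so
`M = D̃ + I - P` is positive definite. As `I - D̃⁻¹(P - I) = D̃⁻¹ M`, the candidate `X̂*` solves
`M X̂* = D̃ X`, and completing the square around it gives
`f_P(Ŷ) = f_P(X̂*) + ∑ₖ (Ŷ - X̂*)ₖᵀ M (Ŷ - X̂*)ₖ`.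
-/

open Matrix BigOperators Finset

/-- The weighted objective of Appendix D with a symmetric row-stochastic attention-weight
matrix `P`: `f_P(X̂) = ∑_i D̃_{ii} ‖X̂_i − X_i‖² + (1/2) ∑_i ∑_j P_{ij} ‖X̂_i − X̂_j‖²`. -/
noncomputable def objFP {n d : ℕ} (A P : Matrix (Fin n) (Fin n) ℝ)
    (X Xhat : Matrix (Fin n) (Fin d) ℝ) : ℝ :=
  ∑ i, ((∑ j, A i j) + 1) * (∑ k, (Xhat i k - X i k) ^ 2)
    + (1 / 2) * ∑ i, ∑ j, P i j * (∑ k, (Xhat i k - Xhat j k) ^ 2)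

section QuadraticForms

variable {ι R : Type*} [Fintype ι] [CommRing R]

theorem Matrix.IsSymm.dotProduct_mulVec_comm {B : Matrix ι ι R} (hB : B.IsSymm) (u v : ι → R) :
    u ⬝ᵥ (B *ᵥ v) = v ⬝ᵥ (B *ᵥ u) := by
  rw [dotProduct_mulVec, dotProduct_comm, ← mulVec_transpose, hB.eq]

theorem Matrix.IsSymm.add_dotProduct_mulVec_add {B : Matrix ι ι R} (hB : B.IsSymm) (u v : ι → R) :
    (u + v) ⬝ᵥ (B *ᵥ (u + v)) = u ⬝ᵥ (B *ᵥ u) + 2 * (v ⬝ᵥ (B *ᵥ u)) + v ⬝ᵥ (B *ᵥ v) := by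
  rw [mulVec_add, dotProduct_add, add_dotProduct, add_dotProduct,
    hB.dotProduct_mulVec_comm u v]
  ring

theorem completing_square_of_mulVec_eq {B L : Matrix ι ι R} (hB : B.IsSymm) (hL : L.IsSymm)
    {x s : ι → R} (hs : (B + L) *ᵥ s = B *ᵥ x) (y : ι → R) :
    (y - x) ⬝ᵥ (B *ᵥ (y - x)) + y ⬝ᵥ (L *ᵥ y)
      = (s - x) ⬝ᵥ (B *ᵥ (s - x)) + s ⬝ᵥ (L *ᵥ s) + (y - s) ⬝ᵥ ((B + L) *ᵥ (y - s)) := by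
  have hcross : (y - s) ⬝ᵥ (B *ᵥ (s - x)) + (y - s) ⬝ᵥ (L *ᵥ s) = 0 := by
    rw [← dotProduct_add, mulVec_sub, ← add_sub_right_comm, ← add_mulVec, hs, sub_self,
      dotProduct_zero]
  have hy : y = s + (y - s) := by abel
  have hyx : y - x = (s - x) + (y - s) := by abel
  rw [hyx, hB.add_dotProduct_mulVec_add, hy, hL.add_dotProduct_mulVec_add, ← hy,
    add_mulVec, dotProduct_add]
  linear_combination 2 * hcross

end QuadraticForms

section Stochastic

variable {ι : Type*} [Fintype ι] [DecidableEq ι]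

theorem dotProduct_one_sub_mulVec_self {P : Matrix ι ι ℝ} (hrow : ∀ i, ∑ j, P i j = 1)
    (hcol : ∀ j, ∑ i, P i j = 1) (z : ι → ℝ) :
    z ⬝ᵥ ((1 - P) *ᵥ z) = (1 / 2) * ∑ i, ∑ j, P i j * (z i - z j) ^ 2 := by
  have hleft : ∑ i, ∑ j, P i j * z i ^ 2 = z ⬝ᵥ z := by
    simp_rw [← sum_mul, hrow, one_mul, dotProduct, sq]
  have hright : ∑ i, ∑ j, P i j * z j ^ 2 = z ⬝ᵥ z := by
    rw [sum_comm]
    simp_rw [← sum_mul, hcol, one_mul, dotProduct, sq]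
  have hmid : ∑ i, ∑ j, P i j * (z i * z j) = z ⬝ᵥ (P *ᵥ z) := by
    simp_rw [dotProduct, mulVec, dotProduct, mul_sum]
    exact sum_congr rfl fun i _ => sum_congr rfl fun j _ => by ring
  have hexpand : ∑ i, ∑ j, P i j * (z i - z j) ^ 2
      = ∑ i, ∑ j, P i j * z i ^ 2 + ∑ i, ∑ j, P i j * z j ^ 2
        - 2 * ∑ i, ∑ j, P i j * (z i * z j) := by
    simp_rw [mul_sum, ← sum_add_distrib, ← sum_sub_distrib]
    exact sum_congr rfl fun i _ => sum_congr rfl fun j _ => by ring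
  rw [hexpand, hleft, hright, hmid, sub_mulVec, one_mulVec, dotProduct_sub]
  ring

theorem posSemidef_one_sub_of_mem_doublyStochastic {P : Matrix ι ι ℝ}
    (hP : P ∈ doublyStochastic ℝ ι) (hsymm : P.IsSymm) : (1 - P).PosSemidef := by
  obtain ⟨hnonneg, hrow, hcol⟩ := mem_doublyStochastic_iff_sum.1 hP
  have hherm : P.IsHermitian := (conjTranspose_eq_transpose_of_trivial P).trans hsymm.eq
  refine .of_dotProduct_mulVec_nonneg (isHermitian_one.sub hherm) fun z => ?_
  rw [star_trivial, dotProduct_one_sub_mulVec_self hrow hcol]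
  exact mul_nonneg (by norm_num) <| sum_nonneg fun i _ => sum_nonneg fun j _ =>
    mul_nonneg (hnonneg i j) (sq_nonneg _)

end Stochastic

section Minimizer

variable {m d : Type*} [Fintype m] [Fintype d]

theorem Matrix.PosDef.sum_dotProduct_mulVec_transpose_pos {M : Matrix m m ℝ} (hM : M.PosDef)
    {E : Matrix m d ℝ} (hE : E ≠ 0) : 0 < ∑ k, Eᵀ k ⬝ᵥ (M *ᵥ Eᵀ k) := by
  have hcol : ∃ k, Eᵀ k ≠ 0 := by
    by_contra! h
    exact hE (transpose_eq_zero.1 (funext h))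
  obtain ⟨k, hk⟩ := hcol
  refine sum_pos' (fun k _ => ?_) ⟨k, mem_univ k, by simpa using hM.dotProduct_mulVec_pos hk⟩
  simpa using hM.posSemidef.dotProduct_mulVec_nonneg (Eᵀ k)

theorem le_and_eq_iff_of_eq_add_sum_dotProduct_mulVec {M : Matrix m m ℝ} (hM : M.PosDef)
    {f : Matrix m d ℝ → ℝ} {S : Matrix m d ℝ}
    (hf : ∀ Y, f Y = f S + ∑ k, (Y - S)ᵀ k ⬝ᵥ (M *ᵥ (Y - S)ᵀ k)) (Y : Matrix m d ℝ) :
    f S ≤ f Y ∧ (f S = f Y ↔ Y = S) := by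
  rcases eq_or_ne Y S with rfl | hY
  · exact ⟨le_rfl, iff_of_true rfl rfl⟩
  · have hlt : f S < f Y := by
      rw [hf Y]
      linarith [hM.sum_dotProduct_mulVec_transpose_pos (sub_ne_zero.2 hY)]
    exact ⟨hlt.le, iff_of_false hlt.ne hY⟩

end Minimizer

theorem objFP_eq_sum_columns {n d : ℕ} (A P : Matrix (Fin n) (Fin n) ℝ)
    (hrow : ∀ i, ∑ j, P i j = 1) (hcol : ∀ j, ∑ i, P i j = 1) (X Y : Matrix (Fin n) (Fin d) ℝ) :
    objFP A P X Y = ∑ k, ((Y - X)ᵀ k ⬝ᵥ (diagonal (fun i => ∑ j, A i j + 1) *ᵥ (Y - X)ᵀ k)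
      + Yᵀ k ⬝ᵥ ((1 - P) *ᵥ Yᵀ k)) := by
  simp_rw [dotProduct_one_sub_mulVec_self hrow hcol, sum_add_distrib, ← mul_sum]
  unfold objFP
  congr 1
  · simp only [dotProduct, mulVec_diagonal, transpose_apply, Matrix.sub_apply, mul_sum]
    rw [sum_comm]
    exact sum_congr rfl fun i _ => sum_congr rfl fun k _ => by ring
  · simp only [mul_sum, transpose_apply]
    exact (sum_congr rfl fun i _ => sum_comm).trans sum_comm

theorem objFP_closed_form_unique_minimizer_general
    (n d : ℕ)
    (A : Matrix (Fin n) (Fin n) ℝ)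
    (hA_01 : ∀ i j, A i j = 0 ∨ A i j = 1)
    (D Dt : Matrix (Fin n) (Fin n) ℝ)
    (hD : D = Matrix.diagonal (fun i => ∑ j, A i j))
    (hDt : Dt = D + 1)
    (P : Matrix (Fin n) (Fin n) ℝ)
    (hP_symm : Pᵀ = P)
    (hP_nonneg : ∀ i j, 0 ≤ P i j)
    (hP_row : ∀ i, ∑ j, P i j = 1)
    (X Xstar : Matrix (Fin n) (Fin d) ℝ)
    (hXstar : Xstar = (1 - Dt⁻¹ * (P - 1))⁻¹ * X) :
    (∀ x : Fin n → ℝ, x ≠ 0 → 0 < x ⬝ᵥ ((Dt + 1 - P) *ᵥ x))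
      ∧ IsUnit (1 - Dt⁻¹ * (P - 1))
      ∧ (∀ Yhat : Matrix (Fin n) (Fin d) ℝ,
          objFP A P X Xstar ≤ objFP A P X Yhat
          ∧ (objFP A P X Xstar = objFP A P X Yhat ↔ Yhat = Xstar)) := by
  have hP_col : ∀ j, ∑ i, P i j = 1 := fun j => by
    rw [← hP_row j]
    exact sum_congr rfl fun i _ => congrFun (congrFun hP_symm j) i
  have hDt_diag : Dt = diagonal (fun i => ∑ j, A i j + 1) := by
    rw [hDt, hD, ← diagonal_one, diagonal_add]
  have hDt_pos : Dt.PosDef := by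
    rw [hDt_diag]
    refine .diagonal fun i => add_pos_of_nonneg_of_pos (sum_nonneg fun j _ => ?_) one_pos
    rcases hA_01 i j with h | h <;> simp [h]
  have hM : (Dt + 1 - P).PosDef := by
    rw [add_sub_assoc]
    exact hDt_pos.add_posSemidef <| posSemidef_one_sub_of_mem_doublyStochastic
      (mem_doublyStochastic_iff_sum.2 ⟨hP_nonneg, hP_row, hP_col⟩) hP_symm
  have hDt_det : IsUnit Dt.det := (isUnit_iff_isUnit_det Dt).1 hDt_pos.isUnit
  have hfactor : 1 - Dt⁻¹ * (P - 1) = Dt⁻¹ * (Dt + 1 - P) := by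
    simp only [mul_sub, mul_add, mul_one, nonsing_inv_mul Dt hDt_det]
    abel
  have hunit : IsUnit (1 - Dt⁻¹ * (P - 1)) := by
    rw [hfactor]
    exact (isUnit_nonsing_inv_iff.2 hDt_pos.isUnit).mul hM.isUnit
  have hnormal : (Dt + 1 - P) * Xstar = Dt * X := by
    rw [hXstar, hfactor, Matrix.mul_inv_rev, nonsing_inv_nonsing_inv Dt hDt_det,
      ← Matrix.mul_assoc, ← Matrix.mul_assoc,
      mul_nonsing_inv _ ((isUnit_iff_isUnit_det _).1 hM.isUnit), one_mul]
  refine ⟨fun x hx => by simpa using hM.dotProduct_mulVec_pos hx, hunit,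
    le_and_eq_iff_of_eq_add_sum_dotProduct_mulVec hM fun Y => ?_⟩
  rw [objFP_eq_sum_columns A P hP_row hP_col, objFP_eq_sum_columns A P hP_row hP_col,
    ← sum_add_distrib]
  refine sum_congr rfl fun k _ => ?_
  rw [← hDt_diag, add_sub_assoc]
  rw [add_sub_assoc] at hnormal
  exact completing_square_of_mulVec_eq (hDt_diag ▸ isSymm_diagonal _) (isSymm_one.sub hP_symm)
    (congrFun (congrArg transpose hnormal) k) _

/-- Let `P ∈ ℝ^{n×n}` be symmetric with nonnegative entries and every row
sum equal to 1. Then `D̃ + I − P` is positive definite, the matrix `I − D̃⁻¹(P − I)` is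
invertible, and the unique global minimizer of the weighted objective `f_P` is
`X̂* = (I − D̃⁻¹(P − I))⁻¹ X`: for every `Ŷ`, `f_P(X̂*) ≤ f_P(Ŷ)` with equality iff `Ŷ = X̂*`. -/
theorem objFP_closed_form_unique_minimizer
    (n d : ℕ) (hn : 0 < n) (hd : 0 < d)
    (A : Matrix (Fin n) (Fin n) ℝ)
    (hA_symm : Aᵀ = A)
    (hA_diag : ∀ i, A i i = 0)
    (hA_01 : ∀ i j, A i j = 0 ∨ A i j = 1)
    (D Dt : Matrix (Fin n) (Fin n) ℝ)
    (hD : D = Matrix.diagonal (fun i => ∑ j, A i j))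
    (hDt : Dt = D + 1)
    (P : Matrix (Fin n) (Fin n) ℝ)
    (hP_symm : Pᵀ = P)
    (hP_nonneg : ∀ i j, 0 ≤ P i j)
    (hP_row : ∀ i, ∑ j, P i j = 1)
    (X Xstar : Matrix (Fin n) (Fin d) ℝ)
    (hXstar : Xstar = (1 - Dt⁻¹ * (P - 1))⁻¹ * X) :
    (∀ x : Fin n → ℝ, x ≠ 0 → 0 < x ⬝ᵥ ((Dt + 1 - P) *ᵥ x))
      ∧ IsUnit (1 - Dt⁻¹ * (P - 1))
      ∧ (∀ Yhat : Matrix (Fin n) (Fin d) ℝ,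
          objFP A P X Xstar ≤ objFP A P X Yhat
          ∧ (objFP A P X Xstar = objFP A P X Yhat ↔ Yhat = Xstar)) :=
  objFP_closed_form_unique_minimizer_general n d A hA_01 D Dt hD hDt P hP_symm hP_nonneg hP_row X
    Xstar hXstar
end
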